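/- arXiv:1501.02552 — 2 statements merged into one kernel-verified Lean document; each statement's English description precedes it below -/
import Mathlib

section
/- For j ∈ ℕ₀, m ∈ {0,...,2^j−1}, and n ∈ ℕ₀, φ(n) lies in the dyadic interval I_{j,m} = [m/2^j, (m+1)/2^j) if and only if n = 2^j φ(m) + 2^j s for some s ∈ ℕ₀. -/
/-!
Split `n = 2^j q + r` with `r < 2^j`. The first `j` binary digits of `φ(n)` are those of `r` in
reverse order, so `2^j φ(n) = ρⱼ(r) + φ(q)`, where `ρⱼ = bitRev j` reverses the lowest `j` bits. Since
`0 ≤ φ(q) < 1`, this says `φ(n) ∈ I_{j,m}` iff `ρⱼ(n) = m`. As `ρⱼ` is an involution on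
`{0, …, 2^j - 1}` and `ρⱼ(m) = 2^j φ(m)`, that is `n ≡ 2^j φ(m) (mod 2^j)`.
-/

open MeasureTheory Finset

/-- Base-2 radical inverse: for `n = ∑ nᵢ 2ⁱ`, `radInv n = ∑ nᵢ 2^{-i-1}`. -/
noncomputable def radInv (n : ℕ) : ℝ :=
  ∑ i ∈ Finset.range n, if n.testBit i then (1:ℝ)/2^(i+1) else 0

/-- L∞-normalized Haar function supported on `I_{j,m} = [m/2^j, (m+1)/2^j)`. -/
noncomputable def haarFn (j m : ℕ) (t : ℝ) : ℝ :=
  if (m:ℝ)/2^j ≤ t ∧ t < (m:ℝ)/2^j + 1/2^(j+1) then 1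
  else if (m:ℝ)/2^j + 1/2^(j+1) ≤ t ∧ t < ((m:ℝ)+1)/2^j then -1
  else 0

/-- Local discrepancy of the first `N` terms of the sequence `x`. -/
noncomputable def disc (x : ℕ → ℝ) (N : ℕ) (t : ℝ) : ℝ :=
  (∑ n ∈ Finset.range N, Set.indicator (Set.Ico (0:ℝ) t) (fun _ => (1:ℝ)) (x n)) / N - t

/-- Symmetrized van der Corput sequence: `z_{2m} = φ(m)`, `z_{2m+1} = 1 - φ(m)`. -/
noncomputable def vdcSym (n : ℕ) : ℝ :=
  if n % 2 = 0 then radInv (n / 2) else 1 - radInv (n / 2)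

/-- Haar coefficient `μ_{j,m}` of the local discrepancy of the first `N` terms of `x`. -/
noncomputable def haarCoeff (x : ℕ → ℝ) (N j m : ℕ) : ℝ :=
  ∫ t in (0:ℝ)..1, disc x N t * haarFn j m t

def bitRev : ℕ → ℕ → ℕ
  | 0, _ => 0
  | j + 1, k => Nat.bit (k.testBit j) (bitRev j k)

theorem testBit_bitRev (j k i : ℕ) :
    (bitRev j k).testBit i = (decide (i < j) && k.testBit (j - 1 - i)) := by
  induction j generalizing i with
  | zero => simp [bitRev]
  | succ j ih =>
    cases i with
    | zero => simp [bitRev]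
    | succ i =>
      rw [bitRev, Nat.testBit_bit_succ, ih]
      congr 2
      · simp
      · omega

theorem bitRev_lt_two_pow (j k : ℕ) : bitRev j k < 2 ^ j :=
  Nat.lt_pow_two_of_testBit _ fun i hi => by simp [testBit_bitRev, Nat.not_lt.2 hi]

theorem bitRev_mod_two_pow (j k : ℕ) : bitRev j (k % 2 ^ j) = bitRev j k :=
  Nat.eq_of_testBit_eq fun i => by
    simp only [testBit_bitRev, Nat.testBit_mod_two_pow]
    rcases lt_or_ge i j with hi | hi
    · simp [hi, show j - 1 - i < j by omega]
    · simp [Nat.not_lt.2 hi]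

theorem bitRev_bitRev (j k : ℕ) : bitRev j (bitRev j k) = k % 2 ^ j :=
  Nat.eq_of_testBit_eq fun i => by
    simp only [testBit_bitRev, Nat.testBit_mod_two_pow]
    rcases lt_or_ge i j with hi | hi
    · simp [hi, show j - 1 - i < j by omega, show j - 1 - (j - 1 - i) = i by omega]
    · simp [Nat.not_lt.2 hi]

theorem bitRev_eq_iff {j m : ℕ} (hm : m < 2 ^ j) (n : ℕ) :
    bitRev j n = m ↔ n % 2 ^ j = bitRev j m := by
  constructor
  · rintro rfl
    rw [bitRev_bitRev]
  · intro h
    rw [← bitRev_mod_two_pow, h, bitRev_bitRev, Nat.mod_eq_of_lt hm]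

theorem Nat.exists_eq_add_mul_iff_mod_eq {n r d : ℕ} (hr : r < d) :
    (∃ s, n = r + d * s) ↔ n % d = r := by
  constructor
  · rintro ⟨s, rfl⟩
    rw [Nat.add_mul_mod_self_left, Nat.mod_eq_of_lt hr]
  · intro h
    exact ⟨n / d, by rw [← h, Nat.mod_add_div]⟩

theorem radInv_eq_sum_range {n K : ℕ} (h : n ≤ K) :
    radInv n = ∑ i ∈ range K, if n.testBit i then (1:ℝ) / 2 ^ (i + 1) else 0 := by
  refine sum_subset (range_subset_range.2 h) fun i _ hin => ?_
  have : n < 2 ^ i := Nat.lt_two_pow_self.trans_le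
    (Nat.pow_le_pow_right two_pos (by simpa using hin))
  simp [Nat.testBit_lt_two_pow this]

theorem radInv_zero : radInv 0 = 0 := by simp [radInv]

theorem radInv_nonneg (n : ℕ) : 0 ≤ radInv n :=
  sum_nonneg fun _ _ => by positivity

theorem two_mul_radInv (n : ℕ) : 2 * radInv n = (n.testBit 0).toNat + radInv (n / 2) := by
  rw [radInv_eq_sum_range (Nat.le_succ n), radInv_eq_sum_range (Nat.div_le_self n 2),
    sum_range_succ', mul_add, mul_sum, add_comm]
  congr 1
  · cases n.testBit 0 <;> simp
  · refine sum_congr rfl fun i _ => ?_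
    rw [Nat.testBit_div_two]
    split_ifs <;> ring

theorem two_pow_mul_radInv (j n : ℕ) : 2 ^ j * radInv n = radInv (n / 2 ^ j) + bitRev j n := by
  induction j with
  | zero => simp [bitRev]
  | succ j ih =>
    rw [pow_succ', mul_assoc, ih, mul_add, two_mul_radInv, Nat.testBit_div_two_pow, zero_add,
      Nat.div_div_eq_div_mul, ← pow_succ, bitRev, Nat.bit_val]
    push_cast
    ring

theorem two_pow_mul_radInv_of_lt {j m : ℕ} (hm : m < 2 ^ j) : 2 ^ j * radInv m = bitRev j m := by
  rw [two_pow_mul_radInv, Nat.div_eq_of_lt hm, radInv_zero, zero_add]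

theorem radInv_lt_one (n : ℕ) : radInv n < 1 := by
  rw [← mul_lt_mul_iff_of_pos_left (pow_pos two_pos n), mul_one,
    two_pow_mul_radInv_of_lt n.lt_two_pow_self]
  exact_mod_cast bitRev_lt_two_pow n n

theorem floor_two_pow_mul_radInv (j n : ℕ) : ⌊2 ^ j * radInv n⌋₊ = bitRev j n := by
  rw [two_pow_mul_radInv, Nat.floor_add_natCast (radInv_nonneg _),
    Nat.floor_eq_zero.2 (radInv_lt_one _), zero_add]

theorem radInv_mem_dyadic_iff (j m n : ℕ) (hm : m < 2^j) :
    radInv n ∈ Set.Ico ((m:ℝ)/2^j) (((m:ℝ)+1)/2^j) ↔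
      ∃ s : ℕ, (n:ℝ) = 2^j * radInv m + 2^j * s := by
  have h2j : (0:ℝ) < 2 ^ j := by positivity
  have hmem : radInv n ∈ Set.Ico ((m:ℝ)/2^j) (((m:ℝ)+1)/2^j) ↔ ⌊2 ^ j * radInv n⌋₊ = m := by
    rw [Nat.floor_eq_iff (mul_nonneg h2j.le (radInv_nonneg n)), Set.mem_Ico,
      div_le_iff₀' h2j, lt_div_iff₀' h2j]
  rw [hmem, floor_two_pow_mul_radInv, bitRev_eq_iff hm,
    ← Nat.exists_eq_add_mul_iff_mod_eq (bitRev_lt_two_pow j m), two_pow_mul_radInv_of_lt hm]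
  exact exists_congr fun s => by norm_cast
end

section
/- For a finite point set (x_n)_{n=0}^{N-1} in [0,1) with all x_n ≠ m/2^j, the Haar coefficient of the counting part g(t) = (1/N)∑_{n=0}^{N-1} 1_{[0,t)}(x_n) equals (2^{−j−1}/N) ∑_{n: x_n ∈ (m/2^j,(m+1)/2^j)} (|2m+1 − 2^{j+1} x_n| − 1). -/
open MeasureTheory Finset

/-! Since every `x n` is nonnegative, the `n`-th summand is `t ↦ 1_{(x n, ∞)}(t) h_{j,m}(t)`, so
its contribution is the tail integral `∫_{x n}^1 h_{j,m}`. Writing `h_{j,m} = 1_{[a,c)} - 1_{[c,b)}`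
with `c` the midpoint of `[a,b)`, this tail is the tent `|c - x n| - (c - a)` on `(a,b)` and
vanishes outside it (for `x n ≤ a` the two halves cancel). -/

open Set

theorem indicator_Ico_one_apply_mul {a y t : ℝ} (f : ℝ → ℝ) (hay : a ≤ y) :
    (Ico a t).indicator (fun _ => (1:ℝ)) y * f t = (Ioi y).indicator f t := by
  by_cases hyt : y < t
  · rw [indicator_of_mem (show y ∈ Ico a t from ⟨hay, hyt⟩),
      indicator_of_mem (show t ∈ Ioi y from hyt), one_mul]
  · rw [indicator_of_notMem (fun h : y ∈ Ico a t => hyt h.2),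
      indicator_of_notMem (show t ∉ Ioi y from hyt), zero_mul]

theorem integral_indicator_Ioi {f : ℝ → ℝ} {a b y : ℝ} (hay : a ≤ y) (hyb : y ≤ b) :
    ∫ t in a..b, (Ioi y).indicator f t = ∫ t in y..b, f t := by
  rw [intervalIntegral.integral_of_le (hay.trans hyb), intervalIntegral.integral_of_le hyb,
    integral_indicator measurableSet_Ioi, Measure.restrict_restrict measurableSet_Ioi, inter_comm,
    Ioc_inter_Ioi, sup_eq_right.2 hay]

theorem intervalIntegrable_indicator_Ico_one {p q a b : ℝ} :
    IntervalIntegrable ((Ico p q).indicator (fun _ => (1:ℝ))) volume a b :=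
  intervalIntegrable_iff.2 <| (integrableOn_const measure_Ioc_lt_top.ne).indicator measurableSet_Ico

theorem integral_indicator_Ico_one {p q y B : ℝ} (hyB : y ≤ B) :
    ∫ t in y..B, (Ico p q).indicator (fun _ => (1:ℝ)) t = max (min q B - max p y) 0 := by
  rw [intervalIntegral.integral_of_le hyB, integral_indicator_const _ measurableSet_Ico,
    measureReal_def, Measure.restrict_apply measurableSet_Ico,
    measure_congr (ae_eq_set_inter (ae_eq_refl (Ico p q)) Ico_ae_eq_Ioc.symm), Set.Ico_inter_Ico,
    Real.volume_Ico, ENNReal.toReal_ofReal', smul_eq_mul, mul_one, inf_comm, sup_comm]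

theorem integral_indicator_Ico_sub_indicator_Ico {p q r y B : ℝ} (hpq : p ≤ q)
    (hqr : r - q = q - p) (hrB : r ≤ B) (hyB : y ≤ B) :
    ∫ t in y..B, ((Ico p q).indicator (fun _ => (1:ℝ)) t - (Ico q r).indicator (fun _ => 1) t)
      = if y ∈ Ioo p r then |q - y| - (q - p) else 0 := by
  rw [intervalIntegral.integral_sub intervalIntegrable_indicator_Ico_one
      intervalIntegrable_indicator_Ico_one, integral_indicator_Ico_one hyB,
    integral_indicator_Ico_one hyB, min_eq_left (by linarith), min_eq_left hrB]
  by_cases hy : y ∈ Ioo p r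
  · obtain ⟨hpy, hyr⟩ := hy
    rw [if_pos ⟨hpy, hyr⟩]
    simp only [max_def, abs_eq_max_neg]
    split_ifs <;> linarith
  · rw [if_neg hy]
    rcases not_and_or.1 hy with hyp | hry <;> rw [not_lt] at * <;> simp only [max_def] <;>
      split_ifs <;> linarith

theorem haarFn_eq_indicator_sub_indicator (j m : ℕ) :
    haarFn j m = fun t =>
      (Ico ((m:ℝ)/2^j) ((m:ℝ)/2^j + 1/2^(j+1))).indicator (fun _ => 1) t
        - (Ico ((m:ℝ)/2^j + 1/2^(j+1)) (((m:ℝ)+1)/2^j)).indicator (fun _ => 1) t := by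
  ext t
  simp only [haarFn, indicator_apply, Set.mem_Ico]
  split_ifs <;> grind

theorem intervalIntegrable_haarFn (j m : ℕ) {a b : ℝ} :
    IntervalIntegrable (haarFn j m) volume a b := by
  rw [haarFn_eq_indicator_sub_indicator]
  exact intervalIntegrable_indicator_Ico_one.sub intervalIntegrable_indicator_Ico_one

theorem integral_haarFn {j m : ℕ} {y B : ℝ} (hmB : ((m:ℝ)+1)/2^j ≤ B) (hyB : y ≤ B) :
    ∫ t in y..B, haarFn j m t = 1/2^(j+1) *
      if y ∈ Ioo ((m:ℝ)/2^j) (((m:ℝ)+1)/2^j) then |2*(m:ℝ)+1 - 2^(j+1)*y| - 1 else 0 := by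
  have hε : (0:ℝ) < 1/2^(j+1) := by positivity
  have hwidth : ((m:ℝ)+1)/2^j - ((m:ℝ)/2^j + 1/2^(j+1)) = 1/2^(j+1) := by
    rw [pow_succ]; field_simp; ring
  have hcentre : (m:ℝ)/2^j + 1/2^(j+1) - y = 1/2^(j+1) * (2*(m:ℝ)+1 - 2^(j+1)*y) := by
    rw [pow_succ]; field_simp
  rw [haarFn_eq_indicator_sub_indicator, integral_indicator_Ico_sub_indicator_Ico
    (by linarith) (by linarith) hmB hyB, add_sub_cancel_left, hcentre, abs_mul, abs_of_pos hε]
  split_ifs <;> ring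

open Classical in
theorem haarCoeff_counting_part_general (N j m : ℕ) (hm : m < 2^j)
    (x : ℕ → ℝ) (hx : ∀ n < N, x n ∈ Set.Ico (0:ℝ) 1) :
    ∫ t in (0:ℝ)..1,
        ((∑ n ∈ Finset.range N, Set.indicator (Set.Ico (0:ℝ) t) (fun _ => (1:ℝ)) (x n)) / N)
          * haarFn j m t
      = (1/2^(j+1)) / N *
          ∑ n ∈ Finset.range N,
            if x n ∈ Set.Ioo ((m:ℝ)/2^j) (((m:ℝ)+1)/2^j)
            then |2*(m:ℝ)+1 - 2^(j+1)*(x n)| - 1 else 0 := by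
  have hmj : ((m:ℝ)+1)/2^j ≤ 1 := by
    rw [div_le_one (by positivity)]; exact_mod_cast hm
  have hx' : ∀ n ∈ range N, 0 ≤ x n ∧ x n ≤ 1 := fun n hn =>
    (hx n (mem_range.1 hn)).imp_right le_of_lt
  calc _ = ∫ t in (0:ℝ)..1, (N:ℝ)⁻¹ * ∑ n ∈ range N, (Ioi (x n)).indicator (haarFn j m) t := by
        congr 1 with t
        rw [div_mul_eq_mul_div, sum_mul, div_eq_inv_mul,
          sum_congr rfl fun n hn => indicator_Ico_one_apply_mul _ (hx' n hn).1]
    _ = (N:ℝ)⁻¹ * ∑ n ∈ range N, ∫ t in x n..1, haarFn j m t := by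
        rw [intervalIntegral.integral_const_mul, intervalIntegral.integral_finsetSum fun n _ =>
          intervalIntegrable_iff.2 <| (intervalIntegrable_iff.1 <|
            intervalIntegrable_haarFn j m).indicator measurableSet_Ioi,
          sum_congr rfl fun n hn => integral_indicator_Ioi (hx' n hn).1 (hx' n hn).2]
    _ = _ := by
        rw [sum_congr rfl fun n hn => integral_haarFn hmj (hx' n hn).2, ← mul_sum]
        ring

open Classical in
theorem haarCoeff_counting_part (N j m : ℕ) (hN : 0 < N) (hm : m < 2^j)
    (x : ℕ → ℝ) (hx : ∀ n < N, x n ∈ Set.Ico (0:ℝ) 1)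
    (hne : ∀ n < N, x n ≠ (m:ℝ)/2^j) :
    ∫ t in (0:ℝ)..1,
        ((∑ n ∈ Finset.range N, Set.indicator (Set.Ico (0:ℝ) t) (fun _ => (1:ℝ)) (x n)) / N)
          * haarFn j m t
      = (1/2^(j+1)) / N *
          ∑ n ∈ Finset.range N,
            if x n ∈ Set.Ioo ((m:ℝ)/2^j) (((m:ℝ)+1)/2^j)
            then |2*(m:ℝ)+1 - 2^(j+1)*(x n)| - 1 else 0 :=
  haarCoeff_counting_part_general N j m hm x hx
end
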